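/- Let S = ℂ[x_0, …, x_n] and let L_1, …, L_l be general linear forms (any n+1 linearly independent) with 0 < r ≤ l and l - r + 1 > n. Then the ideal I = (L_σ : σ ⊆ [l], |σ| = r), where L_σ = ∏_{i ∈ σ} L_i, contains every homogeneous polynomial of degree r; i.e., I_r = S_r. -/
import Mathlib

open MvPolynomial

namespace Stmt7Aux

variable {n : ℕ}

abbrev P (n : ℕ) := MvPolynomial (Fin (n + 1)) ℂ

/-- Products of `t` members of the family `f`, with repetition. -/
def prodSet {ι : Type*} (f : ι → P n) (t : ℕ) : Set (P n) :=
  {p | ∃ m : Multiset ι, Multiset.card m = t ∧ p = (m.map f).prod}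

lemma mul_mem_prodSpan {ι : Type*} (f : ι → P n) (t : ℕ) {g q : P n}
    (hg : g ∈ Submodule.span ℂ (Set.range f))
    (hq : q ∈ Submodule.span ℂ (prodSet f t)) :
    g * q ∈ Submodule.span ℂ (prodSet f (t + 1)) := by
  induction hg using Submodule.span_induction with
  | mem x hx =>
    obtain ⟨i, rfl⟩ := hx
    induction hq using Submodule.span_induction with
    | mem y hy =>
      obtain ⟨m, hm, rfl⟩ := hy
      exact Submodule.subset_span ⟨i ::ₘ m, by simp [hm], by simp⟩
    | zero => simp
    | add a b _ _ ha hb => rw [mul_add]; exact add_mem ha hb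
    | smul c a _ ha => rw [mul_smul_comm]; exact Submodule.smul_mem _ c ha
  | zero => simp
  | add a b _ _ ha hb => rw [add_mul]; exact add_mem ha hb
  | smul c a _ ha => rw [smul_mul_assoc]; exact Submodule.smul_mem _ c ha

lemma multiset_prod_mem {ι : Type*} (f : ι → P n) (m : Multiset (P n))
    (hm : ∀ g ∈ m, g ∈ Submodule.span ℂ (Set.range f)) :
    m.prod ∈ Submodule.span ℂ (prodSet f (Multiset.card m)) := by
  induction m using Multiset.induction with
  | empty => exact Submodule.subset_span ⟨0, rfl, by simp⟩
  | cons a s ih =>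
    rw [Multiset.prod_cons, Multiset.card_cons]
    exact mul_mem_prodSpan f _ (hm a (by simp)) (ih fun g hg => hm g (by simp [hg]))

lemma monomial_one_eq (d : Fin (n + 1) →₀ ℕ) :
    (monomial d 1 : P n) = ((d.toMultiset.map X).prod : P n) := by
  rw [Finsupp.toMultiset_map, Finsupp.prod_toMultiset,
    Finsupp.prod_mapDomain_index (by simp) (fun b m₁ m₂ => pow_add _ _ _),
    monomial_eq, C_1, one_mul]

lemma homog_mem_span {ι : Type*} (f : ι → P n) (t : ℕ)
    (hX : ∀ j, (X j : P n) ∈ Submodule.span ℂ (Set.range f))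
    {F : P n} (hF : F.IsHomogeneous t) :
    F ∈ Submodule.span ℂ (prodSet f t) := by
  rw [← support_sum_monomial_coeff F]
  refine Submodule.sum_mem _ fun d hd => ?_
  have hdeg : d.degree = t := by
    by_contra hc
    exact mem_support_iff.mp hd (hF.coeff_eq_zero hc)
  have h1 : (monomial d (coeff d F) : P n) = coeff d F • (monomial d 1 : P n) := by
    rw [MvPolynomial.smul_eq_C_mul, C_mul_monomial, mul_one]
  rw [h1]
  refine Submodule.smul_mem _ _ ?_
  rw [monomial_one_eq]
  have hcard : Multiset.card (d.toMultiset.map (X : Fin (n + 1) → P n)) = t := by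
    rw [Multiset.card_map, Finsupp.card_toMultiset]
    exact hdeg
  have := multiset_prod_mem f (d.toMultiset.map (X : Fin (n + 1) → P n)) (by
    intro g hg
    obtain ⟨j, _, rfl⟩ := Multiset.mem_map.mp hg
    exact hX j)
  rwa [hcard] at this

lemma linind_X : LinearIndependent ℂ (X : Fin (n + 1) → P n) := by
  have hb := (MvPolynomial.basisMonomials (Fin (n + 1)) ℂ).linearIndependent
  have h := hb.comp (fun j : Fin (n + 1) => Finsupp.single j 1)
    (Finsupp.single_left_injective one_ne_zero)
  have hXe : (X : Fin (n + 1) → P n) =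
      ⇑(MvPolynomial.basisMonomials (Fin (n + 1)) ℂ) ∘ fun j => Finsupp.single j 1 := by
    funext j
    rw [Function.comp_apply, coe_basisMonomials]
    rfl
  rw [hXe]
  exact h

lemma hom1_mem_spanX {p : P n} (hp : p.IsHomogeneous 1) :
    p ∈ Submodule.span ℂ (Set.range (X : Fin (n + 1) → P n)) := by
  have h := homog_mem_span (X : Fin (n + 1) → P n) 1
    (fun j => Submodule.subset_span ⟨j, rfl⟩) hp
  refine Submodule.span_le.mpr ?_ h
  rintro q ⟨m, hm, rfl⟩
  obtain ⟨a, rfl⟩ := Multiset.card_eq_one.mp hm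
  simpa using Submodule.subset_span (Set.mem_range_self a)

lemma mem_span_subset {l : ℕ} (hnl : n + 1 ≤ l) (L : Fin l → P n)
    (hhom : ∀ i, (L i).IsHomogeneous 1)
    (hgen : ∀ s : Finset (Fin l), s.card = min (n + 1) l →
      LinearIndependent ℂ (fun i : s => L i))
    (T : Finset (Fin l)) (hT : T.card = n + 1)
    {p : P n} (hp : p.IsHomogeneous 1) :
    p ∈ Submodule.span ℂ (L '' ↑T) := by
  set W : Submodule ℂ (P n) := Submodule.span ℂ (Set.range (X : Fin (n + 1) → P n)) with hW
  have hLW : ∀ i, L i ∈ W := fun i => hom1_mem_spanX (hhom i)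
  set v : T → W := fun i => ⟨L i, hLW i⟩ with hv
  have hli : LinearIndependent ℂ v := by
    refine LinearIndependent.of_comp W.subtype ?_
    have h1 : LinearIndependent ℂ (fun i : T => L i) := hgen T (by rw [hT, min_eq_left hnl])
    exact h1
  have hfr : Module.finrank ℂ W = n + 1 := by
    rw [hW, finrank_span_eq_card linind_X, Fintype.card_fin]
  have hTn : T.Nonempty := Finset.card_pos.mp (by omega)
  haveI : Nonempty T := Finset.nonempty_coe_sort.mpr hTn
  have hcard : Fintype.card T = n + 1 := by rw [Fintype.card_coe, hT]
  have htop : Submodule.span ℂ (Set.range v) = ⊤ :=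
    hli.span_eq_top_of_card_eq_finrank (by rw [hcard, hfr])
  have hpW : p ∈ W := hom1_mem_spanX hp
  have hmem : (⟨p, hpW⟩ : W) ∈ Submodule.span ℂ (Set.range v) := htop ▸ Submodule.mem_top
  have hmap := Submodule.mem_map_of_mem (f := W.subtype) hmem
  rw [Submodule.map_span] at hmap
  refine Submodule.span_mono ?_ hmap
  rintro q ⟨q', ⟨i, rfl⟩, rfl⟩
  exact ⟨↑i, i.2, rfl⟩

lemma nodup_case {l r : ℕ} (L : Fin l → P n) (m : Multiset (Fin l))
    (hnd : m.Nodup) (hcard : Multiset.card m = r) :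
    (m.map L).prod ∈
      Ideal.span {G | ∃ σ : Finset (Fin l), σ.card = r ∧ G = ∏ i ∈ σ, L i} := by
  apply Ideal.subset_span
  refine ⟨⟨m, hnd⟩, hcard, ?_⟩
  rw [Finset.prod_eq_multiset_prod]

lemma prod_mem_ideal {l r : ℕ} (hr : 0 < r) (hrl : r ≤ l) (hl : n + r ≤ l)
    (L : Fin l → P n)
    (hhom : ∀ i, (L i).IsHomogeneous 1)
    (hgen : ∀ s : Finset (Fin l), s.card = min (n + 1) l →
      LinearIndependent ℂ (fun i : s => L i)) :
    ∀ k (m : Multiset (Fin l)), Multiset.card m = r → r - m.toFinset.card ≤ k →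
      (m.map L).prod ∈
        Ideal.span {G | ∃ σ : Finset (Fin l), σ.card = r ∧ G = ∏ i ∈ σ, L i} := by
  classical
  have hnl : n + 1 ≤ l := by omega
  intro k
  induction k with
  | zero =>
    intro m hcard hk
    have hle := Multiset.toFinset_card_le m
    have hnd : m.Nodup := by
      rw [← Multiset.toFinset_card_eq_card_iff_nodup]
      omega
    exact nodup_case L m hnd hcard
  | succ k ih =>
    intro m hcard hk
    by_cases hnd : m.Nodup
    · exact nodup_case L m hnd hcard
    · obtain ⟨i, hi⟩ : ∃ i, 2 ≤ m.count i := by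
        by_contra hc
        push_neg at hc
        exact hnd (Multiset.nodup_iff_count_le_one.mpr fun a => by
          have := hc a; omega)
      have him : i ∈ m := by rw [← Multiset.count_pos]; omega
      set m₀ := m.erase i with hm₀
      have hm₀card : Multiset.card m₀ = r - 1 := by
        rw [hm₀, Multiset.card_erase_of_mem him, hcard]
        exact Nat.pred_eq_sub_one
      have hiM0 : i ∈ m₀ := by
        rw [← Multiset.count_pos, hm₀, Multiset.count_erase_self]; omega
      -- the used indices
      have htfle := Multiset.toFinset_card_le m
      have htflt : m.toFinset.card < r := by
        rcases lt_or_eq_of_le htfle with h' | h'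
        · omega
        · exact absurd (Multiset.toFinset_card_eq_card_iff_nodup.mp (by omega)) hnd
      -- pick n+1 unused indices
      set U : Finset (Fin l) := Finset.univ \ m.toFinset with hU
      have hUcard : n + 1 ≤ U.card := by
        rw [hU, Finset.card_sdiff_of_subset (Finset.subset_univ _), Finset.card_univ, Fintype.card_fin]
        omega
      obtain ⟨T, hTU, hT⟩ := Finset.exists_subset_card_eq hUcard
      have hLi : L i ∈ Submodule.span ℂ (L '' ↑T) :=
        mem_span_subset hnl L hhom hgen T hT (hhom i)
      have hsplit : (m.map L).prod = L i * (m₀.map L).prod := by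
        conv_lhs => rw [← Multiset.cons_erase him]
        rw [Multiset.map_cons, Multiset.prod_cons]
      have key : ∀ g, g ∈ Submodule.span ℂ (L '' ↑T) →
          g * (m₀.map L).prod ∈
            Ideal.span {G | ∃ σ : Finset (Fin l), σ.card = r ∧ G = ∏ i ∈ σ, L i} := by
        intro g hg
        induction hg using Submodule.span_induction with
        | mem x hx =>
          obtain ⟨j, hjT, rfl⟩ := hx
          have hjm : j ∉ m.toFinset := (Finset.mem_sdiff.mp (hTU hjT)).2
          have heq : L j * (m₀.map L).prod = ((j ::ₘ m₀).map L).prod := by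
            rw [Multiset.map_cons, Multiset.prod_cons]
          rw [heq]
          apply ih
          · rw [Multiset.card_cons, hm₀card]; omega
          · have hsub : insert j m.toFinset ⊆ (j ::ₘ m₀).toFinset := by
              intro a ha
              rcases Finset.mem_insert.mp ha with rfl | ha
              · simp
              · rw [Multiset.mem_toFinset] at ha ⊢
                rw [Multiset.mem_cons]
                right
                by_cases hai : a = i
                · subst hai; exact hiM0
                · exact (Multiset.mem_erase_of_ne hai).mpr ha
            have hcard' := Finset.card_le_card hsub
            rw [Finset.card_insert_of_notMem hjm] at hcard'
            omega
        | zero => simp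
        | add a b _ _ ha hb => rw [add_mul]; exact Ideal.add_mem _ ha hb
        | smul c a _ ha =>
          rw [smul_mul_assoc, MvPolynomial.smul_eq_C_mul]
          exact Ideal.mul_mem_left _ _ ha
      rw [hsplit]
      exact key _ hLi

end Stmt7Aux

open Stmt7Aux in
/-- (Theorem 2.6, case `l - r + 1 > n`.)  If `L_1, …, L_l` are general linear
forms in `ℂ[x_0, …, x_n]` (any `min(n+1, l)` of them linearly independent),
`0 < r ≤ l` and `l - r + 1 > n`, then the ideal generated by the products
`L_σ = ∏_{i ∈ σ} L_i` over all `σ ⊆ [l]` with `|σ| = r` contains every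
homogeneous form of degree `r`. -/
theorem stmt_7 (n l r : ℕ) (hr : 0 < r) (hrl : r ≤ l) (h : n < l - r + 1)
    (L : Fin l → MvPolynomial (Fin (n + 1)) ℂ)
    (hhom : ∀ i, (L i).IsHomogeneous 1)
    (hgen : ∀ s : Finset (Fin l), s.card = min (n + 1) l →
      LinearIndependent ℂ (fun i : s => L i)) :
    ∀ F : MvPolynomial (Fin (n + 1)) ℂ, F.IsHomogeneous r →
      F ∈ Ideal.span {G | ∃ σ : Finset (Fin l), σ.card = r ∧ G = ∏ i ∈ σ, L i} := by
  intro F hF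
  have hl : n + r ≤ l := by omega
  have hnl : n + 1 ≤ l := by omega
  obtain ⟨T, _, hT⟩ := Finset.exists_subset_card_eq
    (s := (Finset.univ : Finset (Fin l))) (n := n + 1)
    (by rw [Finset.card_univ, Fintype.card_fin]; omega)
  have hX : ∀ j, (X j : P n) ∈ Submodule.span ℂ (Set.range L) := fun j => by
    refine Submodule.span_mono ?_
      (mem_span_subset hnl L hhom hgen T hT (isHomogeneous_X ℂ j))
    exact Set.image_subset_range L ↑T
  have hspan := homog_mem_span L r hX hF
  clear hF
  induction hspan using Submodule.span_induction with
  | mem x hx =>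
    obtain ⟨m, hm, rfl⟩ := hx
    exact prod_mem_ideal hr hrl hl L hhom hgen (r - m.toFinset.card) m hm le_rfl
  | zero => exact Ideal.zero_mem _
  | add a b _ _ ha hb => exact Ideal.add_mem _ ha hb
  | smul c a _ ha =>
    rw [MvPolynomial.smul_eq_C_mul]
    exact Ideal.mul_mem_left _ _ ha
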